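/- If G is a connected split graph, then the cd-chromatic number of G equals its clique number: χ_cd(G) = ω(G). -/

import Mathlib

/-!
Take a split partition whose clique side `C` is as large as possible. Then no vertex outside `C`
sees all of `C`, so a clique meets the independent side in at most one vertex `v`, and `v` has a
non-neighbour in `C` that the clique must miss: hence `ω(G) = |C|`, and `|C|` colors are necessary.
For sufficiency, list `C` cyclically as `c₀, …, c_{k-1}`. By connectivity every outside vertex `v`
has a neighbour in `C`, and by maximality a non-neighbour, so it has a non-neighbour `cᵢ` with
`c_{i+1}` adjacent to `v`. Giving `v` the color of `cᵢ` is proper, and the class of `cᵢ` lies in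
the closed neighbourhood of `c_{i+1}`.
-/

variable {V : Type*}

/-- A cd-coloring with `q` colors: a proper coloring in which every nonempty color class is
contained in the closed neighbourhood of some vertex. -/
def IsCDColoring (G : SimpleGraph V) {q : ℕ} (c : V → Fin q) : Prop :=
  (∀ a b, G.Adj a b → c a ≠ c b) ∧
    ∀ i : Fin q, (∃ v, c v = i) → ∃ y, ∀ v, c v = i → G.Adj y v ∨ v = y

/-- The cd-chromatic number: the least number of colors in a cd-coloring. -/
noncomputable def cdChromaticNumber (G : SimpleGraph V) : ℕ :=
  sInf {q | ∃ c : V → Fin q, IsCDColoring G c}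

/-- The clique number: the largest size of a clique. -/
noncomputable def cliqueNumber (G : SimpleGraph V) : ℕ :=
  sSup {n | ∃ s : Finset V, G.IsNClique n s}

/-- A split graph: the vertex set partitions into a clique and an independent set. -/
def IsSplitGraph (G : SimpleGraph V) : Prop :=
  ∃ C I : Set V, C ∪ I = Set.univ ∧ Disjoint C I ∧ G.IsClique C ∧
    ∀ a ∈ I, ∀ b ∈ I, ¬ G.Adj a b

open Fin.NatCast Fin.CommRing in
lemma Fin.exists_not_and_add_one {k : ℕ} [NeZero k] {p : Fin k → Prop}
    (h₁ : ∃ i, p i) (h₀ : ∃ i, ¬ p i) : ∃ i, ¬ p i ∧ p (i + 1) := by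
  obtain ⟨j, hj⟩ := h₁
  obtain ⟨i, hi⟩ := h₀
  by_contra! h
  have hshift : ∀ m : ℕ, ¬ p (i + m) := by
    intro m
    induction m with
    | zero => simpa using hi
    | succ m ih => simpa [add_assoc] using h _ ih
  exact hshift (j - i).val (by simpa using hj)

namespace SimpleGraph

variable {G : SimpleGraph V}

lemma nonempty_of_forall_exists_not_adj [Nonempty V] {C : Finset V}
    (hdom : ∀ v ∉ C, ∃ u ∈ C, ¬ G.Adj v u) : C.Nonempty := by
  obtain ⟨v⟩ := ‹Nonempty V›
  by_cases hv : v ∈ C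
  · exact ⟨v, hv⟩
  · obtain ⟨u, hu, -⟩ := hdom v hv
    exact ⟨u, hu⟩

def IsSplitClique (G : SimpleGraph V) (C : Finset V) : Prop :=
  G.IsClique (C : Set V) ∧ ∀ a b, a ∉ C → b ∉ C → ¬ G.Adj a b

lemma _root_.IsSplitGraph.exists_isSplitClique [Finite V] (h : IsSplitGraph G) :
    ∃ C, G.IsSplitClique C := by
  obtain ⟨C, I, hunion, -, hC, hI⟩ := h
  have hmemI : ∀ a, a ∉ C → a ∈ I := fun a ha =>
    ((Set.ext_iff.mp hunion a).mpr trivial).resolve_left ha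
  refine ⟨(Set.toFinite C).toFinset, by simpa using hC, fun a b ha hb => ?_⟩
  simp only [Set.Finite.mem_toFinset] at ha hb
  exact hI a (hmemI a ha) b (hmemI b hb)

namespace IsSplitClique

variable {C : Finset V}

lemma insert [DecidableEq V] (hC : G.IsSplitClique C) {v : V} (hv : ∀ u ∈ C, G.Adj v u) :
    G.IsSplitClique (insert v C) := by
  refine ⟨?_, fun a b ha hb => hC.2 a b ?_ ?_⟩
  · rw [Finset.coe_insert]
    exact hC.1.insert fun u hu _ => hv u hu
  all_goals grind

lemma mem_of_adj (hC : G.IsSplitClique C) {v w : V} (hv : v ∉ C) (hvw : G.Adj v w) : w ∈ C := by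
  by_contra hw
  exact hC.2 v w hv hw hvw

lemma _root_.IsSplitGraph.exists_maximal_isSplitClique [Finite V] (h : IsSplitGraph G) :
    ∃ C, G.IsSplitClique C ∧ ∀ v ∉ C, ∃ u ∈ C, ¬ G.Adj v u := by
  classical
  obtain ⟨C, hC, hmax⟩ :=
    Set.Finite.exists_maximalFor Finset.card _ (Set.toFinite {C | G.IsSplitClique C}) h.exists_isSplitClique
  refine ⟨C, hC, fun v hv => ?_⟩
  by_contra! hall
  have hle := hmax (hC.insert hall) (Finset.card_le_card (Finset.subset_insert v C))
  rw [Finset.card_insert_of_notMem hv] at hle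
  omega

variable (hC : G.IsSplitClique C) (hdom : ∀ v ∉ C, ∃ u ∈ C, ¬ G.Adj v u)
include hC hdom

lemma card_le_of_isClique {s : Finset V} (hs : G.IsClique (s : Set V)) : s.card ≤ C.card := by
  classical
  by_cases hsC : s ⊆ C
  · exact Finset.card_le_card hsC
  obtain ⟨v, hvs, hvC⟩ := Finset.not_subset.mp hsC
  obtain ⟨u, huC, hvu⟩ := hdom v hvC
  have hsub : s.erase v ⊆ C.erase u := by
    intro w hw
    obtain ⟨hwv, hws⟩ := Finset.mem_erase.mp hw
    have hwC : w ∈ C := by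
      by_contra hwC
      exact hC.2 v w hvC hwC (hs hvs hws (Ne.symm hwv))
    refine Finset.mem_erase.mpr ⟨?_, hwC⟩
    rintro rfl
    exact hvu (hs hvs hws (Ne.symm hwv))
  have := Finset.card_le_card hsub
  rw [Finset.card_erase_of_mem hvs, Finset.card_erase_of_mem huC] at this
  have := Finset.card_pos.mpr ⟨u, huC⟩
  omega

lemma cliqueNumber_eq_card : cliqueNumber G = C.card :=
  IsGreatest.csSup_eq ⟨⟨C, hC.1, rfl⟩, fun _ ⟨_, hs⟩ => hs.2 ▸ hC.card_le_of_isClique hdom hs.1⟩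

lemma exists_adj_of_connected (hconn : G.Connected) {v : V} (hv : v ∉ C) : ∃ w ∈ C, G.Adj v w := by
  have := hconn.nonempty
  obtain ⟨u, hu⟩ := nonempty_of_forall_exists_not_adj hdom
  obtain ⟨p⟩ := hconn.preconnected v u
  cases p with
  | nil => exact absurd hu hv
  | cons h _ => exact ⟨_, hC.mem_of_adj hv h, h⟩

lemma exists_isCDColoring (hconn : G.Connected) : ∃ c : V → Fin C.card, IsCDColoring G c := by
  classical
  have := hconn.nonempty
  have : NeZero C.card := ⟨(nonempty_of_forall_exists_not_adj hdom).card_pos.ne'⟩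
  set e := C.equivFin
  have hgap : ∀ v ∉ C, ∃ i, ¬ G.Adj (e.symm i) v ∧ G.Adj (e.symm (i + 1)) v := by
    intro v hv
    refine Fin.exists_not_and_add_one ?_ ?_
    · obtain ⟨w, hw, hvw⟩ := hC.exists_adj_of_connected hdom hconn hv
      exact ⟨e ⟨w, hw⟩, by simpa using hvw.symm⟩
    · obtain ⟨u, hu, hvu⟩ := hdom v hv
      exact ⟨e ⟨u, hu⟩, by simpa [G.adj_comm] using hvu⟩
  choose! gap hgap using hgap
  let c : V → Fin C.card := fun v => if h : v ∈ C then e ⟨v, h⟩ else gap v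
  have hc_mem {v : V} (hv : v ∈ C) : e.symm (c v) = v := by simp [c, hv]
  have hc_notMem {v : V} (hv : v ∉ C) : c v = gap v := by simp [c, hv]
  refine ⟨c, fun a b hab hcab => ?_, fun i _ => ⟨e.symm (i + 1), fun w hw => ?_⟩⟩
  · wlog ha : a ∈ C generalizing a b
    · exact this b a hab.symm hcab.symm (hC.mem_of_adj ha hab)
    by_cases hb : b ∈ C
    · exact hab.ne (by rw [← hc_mem ha, ← hc_mem hb, hcab])
    · apply (hgap b hb).1
      rwa [← hc_notMem hb, ← hcab, hc_mem ha]
  · by_cases hwC : w ∈ C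
    · rw [← hc_mem hwC, hw]
      by_cases hsucc : (e.symm (i + 1) : V) = e.symm i
      · exact Or.inr hsucc.symm
      · exact Or.inl (hC.1 (e.symm (i + 1)).2 (e.symm i).2 hsucc)
    · rw [← hw, hc_notMem hwC]
      exact Or.inl (hgap w hwC).2

end IsSplitClique

end SimpleGraph

/-- For a connected split graph, the cd-chromatic number equals the clique number. -/
theorem stmt14 [Fintype V] (G : SimpleGraph V) (hconn : G.Connected)
    (hsplit : IsSplitGraph G) :
    cdChromaticNumber G = cliqueNumber G := by
  obtain ⟨C, hC, hdom⟩ := hsplit.exists_maximal_isSplitClique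
  have hcd := hC.exists_isCDColoring hdom hconn
  rw [hC.cliqueNumber_eq_card hdom, cdChromaticNumber]
  refine le_antisymm (Nat.sInf_le hcd) (le_csInf ⟨_, hcd⟩ fun q ⟨c, hc⟩ => ?_)
  simpa using hC.1.card_le_of_coloring (SimpleGraph.Coloring.mk c fun h => hc.1 _ _ h)
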